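/- Let R be a commutative ring and n ≥ 1 a natural number. Set G = (U R (n−1)).comp(1 − 2·X). Then 2·X·(X − 1)·G″ + (6·X − 3)·G′ = 2·(n² − 1)·G. -/

import Mathlib

/-!
`U_m` satisfies the Chebyshev equation `(1 - x²) U'' = 3x U' - m(m+2) U`, and for `m = n - 1`
we have `m(m+2) = n² - 1`. The substitution `x = 1 - 2t` scales each derivative by `-2` and
turns `1 - x²` into `4t(1 - t)`, which gives the hypergeometric equation.
-/

open Polynomial Polynomial.Chebyshev

section
variable {R : Type*} [CommRing R]

theorem derivative_comp_one_sub_two_mul_X (p : R[X]) :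
    derivative (p.comp (1 - 2 * X)) = -2 * (derivative p).comp (1 - 2 * X) := by
  rw [derivative_comp]
  simp only [derivative_sub, derivative_one, derivative_mul, derivative_ofNat, derivative_X]
  ring

theorem derivative_derivative_comp_one_sub_two_mul_X (p : R[X]) :
    derivative (derivative (p.comp (1 - 2 * X))) =
      4 * (derivative (derivative p)).comp (1 - 2 * X) := by
  rw [derivative_comp_one_sub_two_mul_X, derivative_mul, derivative_comp_one_sub_two_mul_X]
  simp only [derivative_neg, derivative_ofNat]
  ring

end

theorem chebyshev_U_hypergeometric_general (R : Type*) [CommRing R] (n : ℕ) :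
    2 * X * (X - 1) * derivative (derivative ((U R ((n : ℤ) - 1)).comp (1 - 2 * X)))
      + (6 * X - 3) * derivative ((U R ((n : ℤ) - 1)).comp (1 - 2 * X)) =
      2 * ((n : R[X]) ^ 2 - 1) * (U R ((n : ℤ) - 1)).comp (1 - 2 * X) := by
  have hode := congr_arg (·.comp (1 - 2 * X))
    (one_sub_X_sq_mul_derivative_derivative_U_eq_poly_in_U (R := R) ((n : ℤ) - 1))
  simp only [Function.iterate_succ, Function.iterate_zero, id_eq, Function.comp_apply, sub_comp,
    mul_comp, one_comp, X_comp, pow_comp, ofNat_comp, intCast_comp, add_comp] at hode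
  rw [derivative_derivative_comp_one_sub_two_mul_X, derivative_comp_one_sub_two_mul_X]
  push_cast at hode
  linear_combination (norm := ring_nf) -2 * hode

/-- `G = U_{n−1}(1−2X)` satisfies the hypergeometric differential equation
`2X(X−1)G'' + (6X−3)G' = 2(n²−1)G`. -/
theorem chebyshev_U_hypergeometric (R : Type*) [CommRing R] (n : ℕ) (hn : 1 ≤ n) :
    2 * X * (X - 1) * derivative (derivative ((U R ((n : ℤ) - 1)).comp (1 - 2 * X)))
      + (6 * X - 3) * derivative ((U R ((n : ℤ) - 1)).comp (1 - 2 * X)) =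
      2 * ((n : R[X]) ^ 2 - 1) * (U R ((n : ℤ) - 1)).comp (1 - 2 * X) :=
  chebyshev_U_hypergeometric_general R n
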